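/- Accuracy of the exponential mechanism for cost minimization: let R be a nonempty finite set, ε > 0, c : R → ℝ a cost function, and t ≥ 0. Consider the distribution on R assigning Pr[r] = exp(−(ε/2)·c(r)) / ∑_{r' ∈ R} exp(−(ε/2)·c(r')). Then Pr_r [ c(r) > min_{r' ∈ R} c(r') + (2/ε)·(ln |R| + t) ] ≤ exp(−t). -/
import Mathlib


open scoped Classical
open Finset

/-- The exponential mechanism distribution for cost minimization on a finite set `R`
with cost function `c`: `Pr[r] = exp(−(ε/2)·c(r)) / ∑_{r'} exp(−(ε/2)·c(r'))`. -/
noncomputable def expDistCost {R : Type*} [Fintype R] (ε : ℝ) (c : R → ℝ) : R → ℝ :=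
  fun r => Real.exp (-(ε / 2) * c r) / ∑ r' : R, Real.exp (-(ε / 2) * c r')

/-- Accuracy of the exponential mechanism for cost minimization:
`Pr_r[c(r) > min_{r'} c(r') + (2/ε)·(ln|R| + t)] ≤ exp(−t)`. -/
theorem expMech_cost_accuracy {R : Type*} [Fintype R] [Nonempty R]
    (ε : ℝ) (hε : 0 < ε) (c : R → ℝ) (t : ℝ) (ht : 0 ≤ t) :
    ∑ r ∈ Finset.univ.filter (fun r : R =>
        c r > Finset.univ.inf' Finset.univ_nonempty c
          + (2 / ε) * (Real.log (Fintype.card R) + t)),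
      expDistCost ε c r ≤ Real.exp (-t) := by
  set m := Finset.univ.inf' Finset.univ_nonempty c with hm
  set S := ∑ r' : R, Real.exp (-(ε / 2) * c r') with hS
  have hN : (0 : ℝ) < (Fintype.card R : ℝ) := by
    exact_mod_cast Fintype.card_pos
  have hSpos : 0 < S := Finset.sum_pos (fun i _ => Real.exp_pos _) Finset.univ_nonempty
  -- S ≥ exp(-(ε/2) m)
  obtain ⟨r0, hr0mem, hr0⟩ := Finset.exists_mem_eq_inf' (Finset.univ_nonempty (α := R)) c
  have hSm : Real.exp (-(ε / 2) * m) ≤ S := by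
    rw [hm, hr0, hS]
    exact Finset.single_le_sum (f := fun r => Real.exp (-(ε / 2) * c r))
      (fun i _ => (Real.exp_pos _).le) (Finset.mem_univ r0)
  set B := m + (2 / ε) * (Real.log (Fintype.card R) + t) with hB
  set F := Finset.univ.filter (fun r : R => c r > B) with hF
  have hterm : ∀ r ∈ F, Real.exp (-(ε / 2) * c r)
      ≤ Real.exp (-(ε / 2) * m) * Real.exp (-t) / (Fintype.card R : ℝ) := by
    intro r hr
    have hcr : B < c r := (Finset.mem_filter.mp hr).2
    have : Real.exp (-(ε / 2) * c r) ≤ Real.exp (-(ε / 2) * B) := by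
      apply Real.exp_le_exp.mpr
      nlinarith [mul_pos (half_pos hε) (sub_pos.mpr hcr)]
    refine this.trans (le_of_eq ?_)
    rw [hB]
    have hε' : ε ≠ 0 := ne_of_gt hε
    have : -(ε / 2) * (m + 2 / ε * (Real.log (Fintype.card R) + t))
        = -(ε / 2) * m + (-Real.log (Fintype.card R) + -t) := by
      field_simp; ring
    rw [this, Real.exp_add, Real.exp_add, Real.exp_neg, Real.exp_log hN]
    ring
  have hsum : ∑ r ∈ F, Real.exp (-(ε / 2) * c r)
      ≤ Real.exp (-(ε / 2) * m) * Real.exp (-t) := by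
    calc ∑ r ∈ F, Real.exp (-(ε / 2) * c r)
        ≤ ∑ _r ∈ F, Real.exp (-(ε / 2) * m) * Real.exp (-t) / (Fintype.card R : ℝ) :=
          Finset.sum_le_sum hterm
      _ = F.card * (Real.exp (-(ε / 2) * m) * Real.exp (-t) / (Fintype.card R : ℝ)) := by
          rw [Finset.sum_const, nsmul_eq_mul]
      _ ≤ (Fintype.card R : ℝ) * (Real.exp (-(ε / 2) * m) * Real.exp (-t) / (Fintype.card R : ℝ)) := by
          apply mul_le_mul_of_nonneg_right
          · exact_mod_cast Finset.card_le_univ F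
          · positivity
      _ = Real.exp (-(ε / 2) * m) * Real.exp (-t) := by field_simp
  have : ∑ r ∈ F, expDistCost ε c r = (∑ r ∈ F, Real.exp (-(ε / 2) * c r)) / S := by
    rw [Finset.sum_div]; rfl
  rw [this]
  rw [div_le_iff₀ hSpos]
  calc ∑ r ∈ F, Real.exp (-(ε / 2) * c r)
      ≤ Real.exp (-(ε / 2) * m) * Real.exp (-t) := hsum
    _ ≤ S * Real.exp (-t) := by
        apply mul_le_mul_of_nonneg_right hSm (Real.exp_pos _).le
    _ = Real.exp (-t) * S := mul_comm _ _
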